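/- The direct sum of two laminar matroids is laminar. -/

import Mathlib

open Set

variable {α : Type*}

/-- A circuit: a minimal dependent set. -/
def Matroid.IsCircuit' (M : Matroid α) (C : Set α) : Prop :=
  M.Dep C ∧ ∀ D, D ⊂ C → M.Indep D

/-- The circuit characterization of laminar matroids. -/
def Matroid.IsLaminar (M : Matroid α) : Prop :=
  ∀ C₁ C₂, M.IsCircuit' C₁ → M.IsCircuit' C₂ → (C₁ ∩ C₂).Nonempty →
    M.closure C₁ ⊆ M.closure C₂ ∨ M.closure C₂ ⊆ M.closure C₁

/-- A laminar family: any two intersecting members are comparable. -/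
def IsLaminarFamily (𝒜 : Set (Set α)) : Prop :=
  ∀ A ∈ 𝒜, ∀ B ∈ 𝒜, (A ∩ B).Nonempty → A ⊆ B ∨ B ⊆ A

/-- `M` is presented by the laminar family `𝒜` with capacities `c`. -/
def Matroid.IsLaminarPresBy (M : Matroid α) (E : Set α) (𝒜 : Set (Set α)) (c : Set α → ℕ) :
    Prop :=
  M.E = E ∧ ∀ I, M.Indep I ↔ I ⊆ E ∧ ∀ A ∈ 𝒜, (I ∩ A).ncard ≤ c A

/-- `M` has some laminar presentation (on its own ground set); this captures being
isomorphic to a laminar matroid `M(E, 𝒜, c)`. -/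
def Matroid.HasLaminarPres (M : Matroid α) : Prop :=
  ∃ (𝒜 : Set (Set α)) (c : Set α → ℕ), IsLaminarFamily 𝒜 ∧ (∀ A ∈ 𝒜, A ⊆ M.E) ∧
    M.IsLaminarPresBy M.E 𝒜 c

/-! A circuit of `M ⊕ N` meets only one summand, say `M`, since otherwise its two traces are proper
subsets, hence independent, and their union would be independent. It is then a circuit of the
restriction `M`, and for subsets of `M.E` an inclusion of closures in `M` persists in `M ⊕ N`, so
laminarity of `M` transfers. -/

namespace Matroid

variable {M N P : Matroid α} {C C₁ C₂ X Y : Set α} {x : α}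

lemma isCircuit'_iff : M.IsCircuit' C ↔ M.IsCircuit C :=
  isCircuit_iff_forall_ssubset.symm

lemma IsRestriction.closure_subset_closure (hMP : M ≤r P) (hX : X ⊆ M.E)
    (hXY : M.closure X ⊆ M.closure Y) : P.closure X ⊆ P.closure Y := by
  obtain ⟨R, hR, rfl⟩ := hMP.exists_eq_restrict
  rw [closure_subset_closure_iff_subset_closure (hX.trans hR)]
  calc X ⊆ (P ↾ R).closure X := (P ↾ R).subset_closure X hX
    _ ⊆ (P ↾ R).closure Y := hXY
    _ ⊆ P.closure Y := by
      rw [restrict_closure_eq', sdiff_eq_empty.mpr hR, union_empty]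
      exact inter_subset_left.trans (P.closure_subset_closure inter_subset_left)

lemma IsLaminar.closure_comparable_of_isRestriction (hM : M.IsLaminar) (hMP : M ≤r P)
    (hC₁ : P.IsCircuit C₁) (hC₂ : P.IsCircuit C₂) (h₁ : C₁ ⊆ M.E) (h₂ : C₂ ⊆ M.E)
    (hC₁₂ : (C₁ ∩ C₂).Nonempty) :
    P.closure C₁ ⊆ P.closure C₂ ∨ P.closure C₂ ⊆ P.closure C₁ := by
  obtain ⟨R, hR, rfl⟩ := hMP.exists_eq_restrict
  have hCR {C} (hC : P.IsCircuit C) (hCR : C ⊆ R) : (P ↾ R).IsCircuit' C :=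
    isCircuit'_iff.2 <| (restrict_isCircuit_iff hR).2 ⟨hC, hCR⟩
  exact (hM C₁ C₂ (hCR hC₁ h₁) (hCR hC₂ h₂) hC₁₂).imp
    ((P.restrict_isRestriction R hR).closure_subset_closure h₁)
    ((P.restrict_isRestriction R hR).closure_subset_closure h₂)

lemma disjointSum_restrict_left (h : Disjoint M.E N.E) : M.disjointSum N h ↾ M.E = M := by
  refine ext_indep rfl fun I (hI : I ⊆ M.E) ↦ ?_
  have hIN : I ∩ N.E = ∅ := (h.mono_left hI).inter_eq
  simp [inter_eq_self_of_subset_left hI, hIN, hI, subset_union_of_subset_left hI]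

lemma isRestriction_disjointSum_left (h : Disjoint M.E N.E) : M ≤r M.disjointSum N h := by
  simpa only [disjointSum_restrict_left] using
    (M.disjointSum N h).restrict_isRestriction M.E (by simp)

lemma IsCircuit.subset_left_of_disjointSum (h : Disjoint M.E N.E)
    (hC : (M.disjointSum N h).IsCircuit C) (hx : x ∈ C) (hxM : x ∈ M.E) : C ⊆ M.E := by
  by_contra hCM
  have hMind := hC.ssubset_indep (inter_ssubset_left_iff.2 hCM)
  have hNind := hC.ssubset_indep (inter_ssubset_left_iff.2 fun hCN ↦ h.ne_of_mem hxM (hCN hx) rfl)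
  simp only [disjointSum_indep_iff, inter_assoc, inter_self] at hMind hNind
  exact hC.dep.not_indep <|
    disjointSum_indep_iff.2 ⟨hMind.1, hNind.2.1, by simpa using hC.subset_ground⟩

lemma IsLaminar.closure_comparable_of_disjointSum (h : Disjoint M.E N.E) (hM : M.IsLaminar)
    (hC₁ : (M.disjointSum N h).IsCircuit C₁) (hC₂ : (M.disjointSum N h).IsCircuit C₂)
    (hx : x ∈ C₁ ∩ C₂) (hxM : x ∈ M.E) :
    (M.disjointSum N h).closure C₁ ⊆ (M.disjointSum N h).closure C₂ ∨
      (M.disjointSum N h).closure C₂ ⊆ (M.disjointSum N h).closure C₁ :=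
  hM.closure_comparable_of_isRestriction (isRestriction_disjointSum_left h) hC₁ hC₂
    (hC₁.subset_left_of_disjointSum h hx.1 hxM) (hC₂.subset_left_of_disjointSum h hx.2 hxM) ⟨x, hx⟩

end Matroid

theorem stmt_12_general (M N : Matroid α)
    (h : Disjoint M.E N.E) (hM : M.IsLaminar) (hN : N.IsLaminar) :
    (M.disjointSum N h).IsLaminar := by
  rintro C₁ C₂ hC₁ hC₂ ⟨x, hx⟩
  rw [Matroid.isCircuit'_iff] at hC₁ hC₂
  rcases (Matroid.disjointSum_ground_eq ▸ hC₁.subset_ground) hx.1 with hxM | hxN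
  · exact hM.closure_comparable_of_disjointSum h hC₁ hC₂ hx hxM
  · rw [Matroid.disjointSum_comm] at hC₁ hC₂ ⊢
    exact hN.closure_comparable_of_disjointSum h.symm hC₁ hC₂ hx hxN

theorem stmt_12 (M N : Matroid α) (hMfin : M.E.Finite) (hNfin : N.E.Finite)
    (h : Disjoint M.E N.E) (hM : M.IsLaminar) (hN : N.IsLaminar) :
    (M.disjointSum N h).IsLaminar :=
  stmt_12_general M N h hM hN
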